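/- Let F be a symmetric, monotone (F_i > 0), degree-1 homogeneous curvature function on Γ₊ satisfying F_i κ_i ≤ F_j κ_j whenever κ_j ≤ κ_i. If κ ∈ Γ₊ with κ₁ = min_i κ_i, then F(κ) = Σ_i F_i κ_i ≤ n F₁ κ₁, and therefore Σ_i F_i κ_i (κ_i − κ_n) κ_n ≤ −(1/n) F (κ_n − κ₁) κ_n, where κ_n = max_i κ_i. -/
import Mathlib


/-- For a monotone degree-1 homogeneous curvature function of class
(K) (encoded by `F = Σ Fᵢκᵢ` (Euler) and `Fᵢκᵢ ≤ Fⱼκⱼ` for `κⱼ ≤ κᵢ`), with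
`κ₁ = min κᵢ` and `κₙ = max κᵢ`: `F ≤ n F₁ κ₁` and
`Σᵢ Fᵢκᵢ(κᵢ − κₙ)κₙ ≤ −(1/n) F (κₙ − κ₁) κₙ`. -/
theorem minkowski_stmt16 (n : ℕ) (hn : 0 < n) (κ Fi : Fin n → ℝ)
    (hκ : ∀ i, 0 < κ i) (hFi : ∀ i, 0 < Fi i)
    (hmono : ∀ i j, κ j ≤ κ i → Fi i * κ i ≤ Fi j * κ j)
    (F : ℝ) (hF : F = ∑ i, Fi i * κ i)
    (i₁ iₙ : Fin n) (hmin : ∀ i, κ i₁ ≤ κ i) (hmax : ∀ i, κ i ≤ κ iₙ) :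
    F ≤ n * (Fi i₁ * κ i₁) ∧
      ∑ i, Fi i * κ i * (κ i - κ iₙ) * κ iₙ ≤
        -(1 / n : ℝ) * F * (κ iₙ - κ i₁) * κ iₙ := by
  have hnpos : (0:ℝ) < n := by exact_mod_cast hn
  have h1 : F ≤ n * (Fi i₁ * κ i₁) := by
    calc F = ∑ i, Fi i * κ i := hF
    _ ≤ ∑ _i : Fin n, Fi i₁ * κ i₁ :=
        Finset.sum_le_sum fun i _ => hmono i i₁ (hmin i)
    _ = n * (Fi i₁ * κ i₁) := by simp [mul_comm]
  refine ⟨h1, ?_⟩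
  have hκn : 0 ≤ κ iₙ := (hκ iₙ).le
  have hterm : ∀ i, Fi i * κ i * (κ i - κ iₙ) * κ iₙ ≤ 0 := by
    intro i
    have : Fi i * κ i * (κ i - κ iₙ) ≤ 0 :=
      mul_nonpos_of_nonneg_of_nonpos (mul_nonneg (hFi i).le (hκ i).le) (by linarith [hmax i])
    exact mul_nonpos_of_nonpos_of_nonneg this hκn
  have hsingle : ∑ i, Fi i * κ i * (κ i - κ iₙ) * κ iₙ ≤
      Fi i₁ * κ i₁ * (κ i₁ - κ iₙ) * κ iₙ := by
    calc ∑ i, Fi i * κ i * (κ i - κ iₙ) * κ iₙ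
        = Fi i₁ * κ i₁ * (κ i₁ - κ iₙ) * κ iₙ
          + ∑ i ∈ Finset.univ.erase i₁, Fi i * κ i * (κ i - κ iₙ) * κ iₙ := by
          exact (Finset.add_sum_erase _ _ (Finset.mem_univ i₁)).symm
      _ ≤ Fi i₁ * κ i₁ * (κ i₁ - κ iₙ) * κ iₙ := by
          have : ∑ i ∈ Finset.univ.erase i₁, Fi i * κ i * (κ i - κ iₙ) * κ iₙ ≤ 0 :=
            Finset.sum_nonpos fun i _ => hterm i
          linarith
  have hkey : Fi i₁ * κ i₁ * (κ i₁ - κ iₙ) * κ iₙ ≤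
      -(1 / n : ℝ) * F * (κ iₙ - κ i₁) * κ iₙ := by
    have h2 : (1 / n : ℝ) * F ≤ Fi i₁ * κ i₁ := by
      rw [div_mul_eq_mul_div, one_mul, div_le_iff₀ hnpos]
      linarith [h1]
    have hd : 0 ≤ κ iₙ - κ i₁ := by linarith [hmax i₁]
    nlinarith [mul_le_mul_of_nonneg_right (mul_le_mul_of_nonneg_right h2 hd) hκn]
  linarith
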